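/- If (v_n) is a dense sequence in the unit sphere of ℓ₁, then for any two distinct elements x, y of ℓ∞ there exists k with ⟨x, v_k⟩ and ⟨y, v_k⟩ both nonzero and of opposite signs, provided y is not a nonnegative multiple of x and x is not a nonnegative multiple of y. -/

import Mathlib

/-!
First a finitely supported `w` with `⟨x, w⟩ ⟨y, w⟩ < 0`: if some minor `x i * y j - x j * y i` is
nonzero, Cramer's rule on the coordinates `i, j` gives one; otherwise `x` and `y` are
proportional, and since neither is a nonnegative multiple of the other, `y = a • x` with `a < 0`
and `x ≠ 0`, so a unit vector works. For bounded `x` the map `w ↦ ⟨x, w⟩` is Lipschitz for the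
`ℓ₁` distance, so both signs persist on a neighbourhood of `w / ‖w‖₁`, which contains some `v n`.
-/

open Filter Topology

/-- The duality pairing `⟨x, v⟩ = ∑ₖ x k * v k`. -/
noncomputable def pairing (x v : ℕ → ℝ) : ℝ := ∑' k, x k * v k

section Pairing

variable {x u w : ℕ → ℝ} {C : ℝ}

lemma summable_mul_of_abs_le (hC : ∀ k, |x k| ≤ C) (hw : Summable fun k => |w k|) :
    Summable fun k => x k * w k :=
  (hw.mul_left C).of_norm_bounded fun k => by
    rw [Real.norm_eq_abs, abs_mul]
    exact mul_le_mul_of_nonneg_right (hC k) (abs_nonneg _)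

lemma abs_pairing_le (hC : ∀ k, |x k| ≤ C) (hw : Summable fun k => |w k|) :
    |pairing x w| ≤ C * ∑' k, |w k| := by
  rw [pairing, ← tsum_mul_left, ← Real.norm_eq_abs]
  refine tsum_of_norm_bounded (hw.mul_left C).hasSum fun k => ?_
  rw [Real.norm_eq_abs, abs_mul]
  exact mul_le_mul_of_nonneg_right (hC k) (abs_nonneg _)

lemma abs_pairing_sub_le (hC : ∀ k, |x k| ≤ C) (hw : Summable fun k => |w k|)
    (hu : Summable fun k => |u k|) :
    |pairing x w - pairing x u| ≤ C * ∑' k, |w k - u k| := by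
  have hwu : Summable fun k => |w k - u k| :=
    (hw.add hu).of_nonneg_of_le (fun k => abs_nonneg _) fun k => abs_sub _ _
  have hsub : pairing x w - pairing x u = pairing x (w - u) := by
    rw [pairing, pairing, pairing, ← (summable_mul_of_abs_le hC hw).tsum_sub
      (summable_mul_of_abs_le hC hu)]
    simp only [Pi.sub_apply, mul_sub]
  exact hsub ▸ abs_pairing_le hC hwu

lemma mul_pos_of_abs_sub_lt_abs {a b : ℝ} (h : |b - a| < |a|) : 0 < b * a := by
  have ha : 0 < |a| := (abs_nonneg _).trans_lt h
  nlinarith [neg_abs_le ((b - a) * a), abs_mul (b - a) a, abs_mul_abs_self a,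
    mul_lt_mul_of_pos_right h ha]

lemma exists_pos_pairing_mul_of_dist_lt (hC : ∀ k, |x k| ≤ C)
    (hw : Summable fun k => |w k|) (hxw : pairing x w ≠ 0) :
    ∃ ε > 0, ∀ u : ℕ → ℝ, (Summable fun k => |u k|) → ∑' k, |w k - u k| < ε →
      0 < pairing x u * pairing x w := by
  have hC0 : 0 ≤ C := (abs_nonneg _).trans (hC 0)
  refine ⟨|pairing x w| / (C + 1), by positivity, fun u hu hdist => ?_⟩
  refine mul_pos_of_abs_sub_lt_abs ?_
  calc |pairing x u - pairing x w| = |pairing x w - pairing x u| := abs_sub_comm _ _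
    _ ≤ C * ∑' k, |w k - u k| := abs_pairing_sub_le hC hw hu
    _ ≤ C * (|pairing x w| / (C + 1)) := by gcongr
    _ < |pairing x w| := by
      rw [mul_div_assoc', div_lt_iff₀ (by positivity)]
      nlinarith [abs_pos.2 hxw]

end Pairing

section TwoPoint

variable {i j : ℕ}

lemma tsum_eq_add_of_support_subset_pair {f : ℕ → ℝ} (hij : i ≠ j)
    (hf : ∀ k, k ≠ i → k ≠ j → f k = 0) : ∑' k, f k = f i + f j := by
  rw [tsum_eq_sum (s := {i, j}), Finset.sum_pair hij]
  intro k hk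
  simp only [Finset.mem_insert, Finset.mem_singleton, not_or] at hk
  exact hf k hk.1 hk.2

lemma pairing_single_add_single (x : ℕ → ℝ) (hij : i ≠ j) (c d : ℝ) :
    pairing x (Pi.single i c + Pi.single j d) = c * x i + d * x j := by
  rw [pairing, tsum_eq_add_of_support_subset_pair hij fun k hi hj => by simp [hi, hj]]
  simp [hij, hij.symm, mul_comm]

lemma tsum_abs_single_add_single (hij : i ≠ j) (c d : ℝ) :
    ∑' k, |(Pi.single i c + Pi.single j d : ℕ → ℝ) k| = |c| + |d| := by
  rw [tsum_eq_add_of_support_subset_pair hij fun k hi hj => by simp [hi, hj]]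
  simp [hij, hij.symm]

lemma summable_abs_single_add_single (c d : ℝ) :
    Summable fun k => |(Pi.single i c + Pi.single j d : ℕ → ℝ) k| := by
  refine summable_of_ne_finset_zero (s := {i, j}) fun k hk => ?_
  simp only [Finset.mem_insert, Finset.mem_singleton, not_or] at hk
  simp [hk.1, hk.2]

end TwoPoint

section OppositeSigns

variable {x y : ℕ → ℝ}

lemma eq_smul_of_cross_eq_zero {i : ℕ} (hi : x i ≠ 0)
    (hcross : ∀ j, x i * y j - x j * y i = 0) : y = (y i / x i) • x := by
  funext k
  simp only [Pi.smul_apply, smul_eq_mul]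
  field_simp
  linarith [hcross k]

lemma exists_two_point_mul_neg (h1 : ¬ ∃ a : ℝ, 0 ≤ a ∧ y = a • x)
    (h2 : ¬ ∃ a : ℝ, 0 ≤ a ∧ x = a • y) :
    ∃ i j, i ≠ j ∧ ∃ c d : ℝ, (c * x i + d * x j) * (c * y i + d * y j) < 0 := by
  by_cases hcross : ∃ i j, x i * y j - x j * y i ≠ 0
  · obtain ⟨i, j, hD⟩ := hcross
    refine ⟨i, j, by rintro rfl; exact hD (by ring), y j + x j, -(y i + x i), ?_⟩
    have : ((y j + x j) * x i + -(y i + x i) * x j) * ((y j + x j) * y i + -(y i + x i) * y j)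
        = -(x i * y j - x j * y i) ^ 2 := by ring
    rw [this]
    exact neg_neg_of_pos (by positivity)
  · push Not at hcross
    obtain ⟨i, hi⟩ : ∃ i, x i ≠ 0 := by
      by_contra! hx
      exact h2 ⟨0, le_rfl, funext fun k => by simp [hx k]⟩
    have hy := eq_smul_of_cross_eq_zero hi (hcross i)
    have ha : y i / x i < 0 := by
      by_contra! ha
      exact h1 ⟨_, ha, hy⟩
    refine ⟨i, i + 1, by omega, 1, 0, ?_⟩
    rw [hy]
    simp only [Pi.smul_apply, smul_eq_mul, one_mul, zero_mul, add_zero]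
    nlinarith [mul_self_pos.2 hi]

lemma exists_unit_pairing_mul_neg (h1 : ¬ ∃ a : ℝ, 0 ≤ a ∧ y = a • x)
    (h2 : ¬ ∃ a : ℝ, 0 ≤ a ∧ x = a • y) :
    ∃ w : ℕ → ℝ, (Summable fun k => |w k|) ∧ ∑' k, |w k| = 1 ∧
      pairing x w * pairing y w < 0 := by
  obtain ⟨i, j, hij, c, d, hneg⟩ := exists_two_point_mul_neg h1 h2
  have hs : 0 < |c| + |d| := by
    rcases eq_or_ne c 0 with rfl | hc
    · rcases eq_or_ne d 0 with rfl | hd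
      · simp at hneg
      · simpa using hd
    · positivity
  set s := |c| + |d|
  refine ⟨Pi.single i (c / s) + Pi.single j (d / s), summable_abs_single_add_single _ _, ?_, ?_⟩
  · rw [tsum_abs_single_add_single hij, abs_div, abs_div, abs_of_pos hs, ← add_div,
      div_self hs.ne']
  · rw [pairing_single_add_single x hij, pairing_single_add_single y hij]
    have : (c / s * x i + d / s * x j) * (c / s * y i + d / s * y j)
        = (c * x i + d * x j) * (c * y i + d * y j) / s ^ 2 := by
      field_simp
    rw [this]
    exact div_neg_of_neg_of_pos hneg (by positivity)

end OppositeSigns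

theorem exists_pairing_opposite_signs_general
    (v : ℕ → ℕ → ℝ) (hv1 : ∀ n, Summable fun k => |v n k|)
    (hdense : ∀ w : ℕ → ℝ, (Summable fun k => |w k|) → ∑' k, |w k| = 1 →
      ∀ ε > 0, ∃ n, ∑' k, |w k - v n k| < ε)
    (x y : ℕ → ℝ) (hx : ∃ C, ∀ k, |x k| ≤ C) (hy : ∃ C, ∀ k, |y k| ≤ C)
    (h1 : ¬ ∃ a : ℝ, 0 ≤ a ∧ y = a • x)
    (h2 : ¬ ∃ a : ℝ, 0 ≤ a ∧ x = a • y) :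
    ∃ k, pairing x (v k) ≠ 0 ∧ pairing y (v k) ≠ 0 ∧
      pairing x (v k) * pairing y (v k) < 0 := by
  obtain ⟨Cx, hCx⟩ := hx
  obtain ⟨Cy, hCy⟩ := hy
  obtain ⟨w, hw, hw1, hneg⟩ := exists_unit_pairing_mul_neg h1 h2
  obtain ⟨εx, hεx, hxsign⟩ :=
    exists_pos_pairing_mul_of_dist_lt hCx hw (left_ne_zero_of_mul hneg.ne)
  obtain ⟨εy, hεy, hysign⟩ :=
    exists_pos_pairing_mul_of_dist_lt hCy hw (right_ne_zero_of_mul hneg.ne)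
  obtain ⟨n, hn⟩ := hdense w hw hw1 (min εx εy) (lt_min hεx hεy)
  have hxn := hxsign (v n) (hv1 n) (hn.trans_le (min_le_left _ _))
  have hyn := hysign (v n) (hv1 n) (hn.trans_le (min_le_right _ _))
  have hsign : pairing x (v n) * pairing y (v n) < 0 := by
    refine neg_of_mul_pos_left ?_ hneg.le
    calc 0 < (pairing x (v n) * pairing x w) * (pairing y (v n) * pairing y w) := mul_pos hxn hyn
      _ = _ := by ring
  exact ⟨n, left_ne_zero_of_mul hsign.ne, right_ne_zero_of_mul hsign.ne, hsign⟩

/-- If `(vₙ)` is a dense sequence in the unit sphere of `ℓ₁`, then for any two distinct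
elements `x, y` of `ℓ∞`, neither of which is a nonnegative multiple of the other, there
exists `k` with `⟨x, v_k⟩` and `⟨y, v_k⟩` both nonzero and of opposite signs. -/
theorem exists_pairing_opposite_signs
    (v : ℕ → ℕ → ℝ) (hv1 : ∀ n, Summable fun k => |v n k|)
    (hv2 : ∀ n, ∑' k, |v n k| = 1)
    (hdense : ∀ w : ℕ → ℝ, (Summable fun k => |w k|) → ∑' k, |w k| = 1 →
      ∀ ε > 0, ∃ n, ∑' k, |w k - v n k| < ε)
    (x y : ℕ → ℝ) (hx : ∃ C, ∀ k, |x k| ≤ C) (hy : ∃ C, ∀ k, |y k| ≤ C)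
    (hne : x ≠ y)
    (h1 : ¬ ∃ a : ℝ, 0 ≤ a ∧ y = a • x)
    (h2 : ¬ ∃ a : ℝ, 0 ≤ a ∧ x = a • y) :
    ∃ k, pairing x (v k) ≠ 0 ∧ pairing y (v k) ≠ 0 ∧
      pairing x (v k) * pairing y (v k) < 0 :=
  exists_pairing_opposite_signs_general v hv1 hdense x y hx hy h1 h2
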